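/- arXiv:1007.5262 — 9 statements merged into one kernel-verified Lean document; each statement's English description precedes it below -/
import Mathlib

section
/- Let τ₀, u₀, ν, F > 0 and r > 0, s, c ∈ ℝ, let c_s := τ₀^{-3/2}/√F, and let P(λ,k) := λ² + (r/u₀ − 2ick + νk²/τ₀²)·λ + ik·[(s+1)/τ₀ − cr/u₀ + ik(c² − c_s²) − cνk²/τ₀²]. Suppose λ : ℝ → ℂ is twice differentiable on a neighborhood of 0, λ(0) = 0, and P(λ(k), k) = 0 for all k in that neighborhood. Then λ''(0)/2 = (u₀/r)·[(((s+1)/r)·(u₀/τ₀))² − c_s²]. In particular, if the subcharacteristic condition fails, i.e. ((s+1)/r)·(u₀/τ₀) > c_s, then Re λ''(0) > 0. -/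
/-!
Write the dispersion relation as `λ² + p(k) λ + q(k) = 0` with polynomials `p`, `q`, where
`q(0) = 0`. Differentiating the identity `P(λ(k), k) = 0` once and twice at `k = 0`, where
`λ(0) = 0`, gives `p(0) λ'(0) + q'(0) = 0` and
`2 λ'(0)² + 2 p'(0) λ'(0) + p(0) λ''(0) + q''(0) = 0`. With `p(0) = r/u₀` these yield
`λ'(0) = i (c − df_*)` and then `λ''(0) = 2 (u₀/r) (df_*² − c_s²)`, which is real. As `c_s ≥ 0`,
`df_* > c_s` makes it positive.
-/

open Complex Filter Polynomial Topology

theorem Polynomial.hasDerivAt_eval_ofReal (p : ℂ[X]) (x : ℝ) :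
    HasDerivAt (fun k : ℝ => p.eval (k : ℂ)) (p.derivative.eval (x : ℂ)) x :=
  (p.hasDerivAt (x : ℂ)).comp_ofReal

section QuadraticRoot

variable (p q : ℂ[X]) {lam : ℝ → ℂ}

theorem hasDerivAt_quadratic_comp {x : ℝ} {l' : ℂ} (hl : HasDerivAt lam l' x) :
    HasDerivAt (fun k : ℝ => lam k ^ 2 + p.eval (k : ℂ) * lam k + q.eval (k : ℂ))
      (2 * lam x * l' + (p.derivative.eval (x : ℂ) * lam x + p.eval (x : ℂ) * l')
        + q.derivative.eval (x : ℂ)) x := by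
  refine (((hl.pow 2).add ((p.hasDerivAt_eval_ofReal x).mul hl)).add
    (q.hasDerivAt_eval_ofReal x)).congr_deriv ?_
  norm_num

theorem eventually_quadratic_deriv_eq_zero
    (hroot : ∀ᶠ k in 𝓝 0, lam k ^ 2 + p.eval (k : ℂ) * lam k + q.eval (k : ℂ) = 0)
    (hdiff : ∀ᶠ k in 𝓝 0, DifferentiableAt ℝ lam k) :
    ∀ᶠ k in 𝓝 0, 2 * lam k * deriv lam k
      + (p.derivative.eval (k : ℂ) * lam k + p.eval (k : ℂ) * deriv lam k)
      + q.derivative.eval (k : ℂ) = 0 := by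
  have hderiv := Filter.EventuallyEq.deriv (f := fun _ => (0 : ℂ)) hroot
  filter_upwards [hderiv, hdiff] with k hk hdk
  rw [← (hasDerivAt_quadratic_comp p q hdk.hasDerivAt).deriv]
  simpa using hk

theorem quadratic_root_implicit_deriv (hlam0 : lam 0 = 0)
    (hroot : ∀ᶠ k in 𝓝 0, lam k ^ 2 + p.eval (k : ℂ) * lam k + q.eval (k : ℂ) = 0)
    (hdiff : ∀ᶠ k in 𝓝 0, DifferentiableAt ℝ lam k)
    (hdiff2 : DifferentiableAt ℝ (deriv lam) 0) :
    p.eval 0 * deriv lam 0 + q.derivative.eval 0 = 0 ∧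
      2 * deriv lam 0 ^ 2 + 2 * p.derivative.eval 0 * deriv lam 0
        + p.eval 0 * deriv (deriv lam) 0 + q.derivative.derivative.eval 0 = 0 := by
  have hE := eventually_quadratic_deriv_eq_zero p q hroot hdiff
  have hl := hdiff.self_of_nhds.hasDerivAt
  have hE' := (((hl.const_mul (2 : ℂ)).mul hdiff2.hasDerivAt).add
      (((p.derivative.hasDerivAt_eval_ofReal 0).mul hl).add
        ((p.hasDerivAt_eval_ofReal 0).mul hdiff2.hasDerivAt))).add
      (q.derivative.hasDerivAt_eval_ofReal 0)
  have hsecond := hE'.unique ((hasDerivAt_const (0 : ℝ) (0 : ℂ)).congr_of_eventuallyEq hE)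
  constructor
  · simpa [hlam0] using hE.self_of_nhds
  · simp only [hlam0, ofReal_zero, mul_zero] at hsecond
    linear_combination hsecond

end QuadraticRoot

theorem re_pos_of_div_two_eq {z : ℂ} {a d e : ℝ} (ha : 0 < a) (he : 0 ≤ e) (hed : e < d)
    (hz : z / 2 = (a : ℂ) * ((d : ℂ) ^ 2 - (e : ℂ) ^ 2)) : 0 < z.re := by
  have hz' : z = ((2 * a * (d ^ 2 - e ^ 2) : ℝ) : ℂ) := by
    push_cast
    linear_combination 2 * hz
  rw [hz', ofReal_re]
  exact mul_pos (by positivity) (sub_pos.2 (pow_lt_pow_left₀ hed he two_ne_zero))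

theorem stmt3_general (τ₀ u₀ ν F r s c : ℝ) (hτ₀ : 0 < τ₀) (hu₀ : 0 < u₀)
    (hr : 0 < r)
    (cs : ℝ) (hcs : cs = τ₀ ^ (-(3 : ℝ) / 2) / Real.sqrt F)
    (P : ℂ → ℝ → ℂ)
    (hP : ∀ (lam : ℂ) (k : ℝ), P lam k =
      lam ^ 2
        + ((r : ℂ) / (u₀ : ℂ) - 2 * Complex.I * (c : ℂ) * (k : ℂ)
            + (ν : ℂ) * (k : ℂ) ^ 2 / (τ₀ : ℂ) ^ 2) * lam
        + Complex.I * (k : ℂ) *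
            (((s : ℂ) + 1) / (τ₀ : ℂ) - (c : ℂ) * (r : ℂ) / (u₀ : ℂ)
              + Complex.I * (k : ℂ) * ((c : ℂ) ^ 2 - (cs : ℂ) ^ 2)
              - (c : ℂ) * (ν : ℂ) * (k : ℂ) ^ 2 / (τ₀ : ℂ) ^ 2))
    (lam : ℝ → ℂ) (U : Set ℝ) (hU : U ∈ nhds (0 : ℝ))
    (hdiff : ∀ x ∈ U, DifferentiableAt ℝ lam x)
    (hdiff2 : ∀ x ∈ U, DifferentiableAt ℝ (deriv lam) x)
    (hlam0 : lam 0 = 0)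
    (hroot : ∀ x ∈ U, P (lam x) x = 0) :
    deriv (deriv lam) 0 / 2
      = ((u₀ : ℂ) / (r : ℂ)) *
          (((((s : ℂ) + 1) / (r : ℂ)) * ((u₀ : ℂ) / (τ₀ : ℂ))) ^ 2 - (cs : ℂ) ^ 2)
    ∧ (((s + 1) / r) * (u₀ / τ₀) > cs → 0 < (deriv (deriv lam) 0).re) := by
  set p : ℂ[X] := C ((r : ℂ) / u₀) + C (-2 * I * c) * X + C ((ν : ℂ) / τ₀ ^ 2) * X ^ 2
  set q : ℂ[X] := C (I * (((s : ℂ) + 1) / τ₀ - c * r / u₀)) * X + C ((cs : ℂ) ^ 2 - c ^ 2) * X ^ 2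
    + C (-(I * c * ν / τ₀ ^ 2)) * X ^ 3
  have hquad : ∀ᶠ k in 𝓝 0, lam k ^ 2 + p.eval (k : ℂ) * lam k + q.eval (k : ℂ) = 0 := by
    filter_upwards [hU] with k hk
    have hPk := hroot k hk
    rw [hP] at hPk
    simp only [p, q, eval_add, eval_mul, eval_C, eval_X, eval_pow]
    linear_combination hPk + ((k : ℂ) ^ 2 * (cs ^ 2 - c ^ 2)) * I_sq
  obtain ⟨hfirst, hsecond⟩ := quadratic_root_implicit_deriv p q hlam0 hquad
    (Filter.mem_of_superset hU hdiff) (hdiff2 0 (mem_of_mem_nhds hU))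
  simp only [p, q, derivative_add, derivative_C, derivative_C_mul_X, derivative_C_mul_X_pow,
    eval_add, eval_C, eval_mul, eval_X, eval_pow, eval_zero] at hfirst hsecond
  norm_num at hfirst hsecond
  have hτ : (τ₀ : ℂ) ≠ 0 := ofReal_ne_zero.2 hτ₀.ne'
  have hu : (u₀ : ℂ) ≠ 0 := ofReal_ne_zero.2 hu₀.ne'
  have hr' : (r : ℂ) ≠ 0 := ofReal_ne_zero.2 hr.ne'
  have hslope : deriv lam 0 = I * (c - (s + 1) / r * (u₀ / τ₀)) := by
    field_simp at hfirst ⊢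
    linear_combination hfirst
  have hcurv : deriv (deriv lam) 0 / 2
      = ((u₀ : ℂ) / r) * ((((s : ℂ) + 1) / r * (u₀ / τ₀)) ^ 2 - (cs : ℂ) ^ 2) := by
    rw [hslope] at hsecond
    field_simp at hsecond ⊢
    linear_combination hsecond + 2 * u₀ * ((c * r * τ₀) ^ 2 - ((s + 1) * u₀) ^ 2) * I_sq
  have hcs0 : 0 ≤ cs := hcs ▸ div_nonneg (Real.rpow_nonneg hτ₀.le _) (Real.sqrt_nonneg F)
  refine ⟨hcurv, fun hsub => re_pos_of_div_two_eq (div_pos hu₀ hr) hcs0 hsub ?_⟩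
  push_cast
  exact hcurv

/-- Second-order expansion of the zero root of the dispersion relation of the
linearized viscous St. Venant equations at frequency `k = 0`:
`λ''(0)/2 = (u₀/r)·[(((s+1)/r)·(u₀/τ₀))² − c_s²]`; failure of the
subcharacteristic condition forces `Re λ''(0) > 0`, i.e. spectral instability. -/
theorem stmt3 (τ₀ u₀ ν F r s c : ℝ) (hτ₀ : 0 < τ₀) (hu₀ : 0 < u₀) (hν : 0 < ν)
    (hF : 0 < F) (hr : 0 < r)
    (cs : ℝ) (hcs : cs = τ₀ ^ (-(3 : ℝ) / 2) / Real.sqrt F)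
    (P : ℂ → ℝ → ℂ)
    (hP : ∀ (lam : ℂ) (k : ℝ), P lam k =
      lam ^ 2
        + ((r : ℂ) / (u₀ : ℂ) - 2 * Complex.I * (c : ℂ) * (k : ℂ)
            + (ν : ℂ) * (k : ℂ) ^ 2 / (τ₀ : ℂ) ^ 2) * lam
        + Complex.I * (k : ℂ) *
            (((s : ℂ) + 1) / (τ₀ : ℂ) - (c : ℂ) * (r : ℂ) / (u₀ : ℂ)
              + Complex.I * (k : ℂ) * ((c : ℂ) ^ 2 - (cs : ℂ) ^ 2)
              - (c : ℂ) * (ν : ℂ) * (k : ℂ) ^ 2 / (τ₀ : ℂ) ^ 2))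
    (lam : ℝ → ℂ) (U : Set ℝ) (hU : U ∈ nhds (0 : ℝ))
    (hdiff : ∀ x ∈ U, DifferentiableAt ℝ lam x)
    (hdiff2 : ∀ x ∈ U, DifferentiableAt ℝ (deriv lam) x)
    (hlam0 : lam 0 = 0)
    (hroot : ∀ x ∈ U, P (lam x) x = 0) :
    deriv (deriv lam) 0 / 2
      = ((u₀ : ℂ) / (r : ℂ)) *
          (((((s : ℂ) + 1) / (r : ℂ)) * ((u₀ : ℂ) / (τ₀ : ℂ))) ^ 2 - (cs : ℂ) ^ 2)
    ∧ (((s + 1) / r) * (u₀ / τ₀) > cs → 0 < (deriv (deriv lam) 0).re) :=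
  stmt3_general τ₀ u₀ ν F r s c hτ₀ hu₀ hr cs hcs P hP lam U hU hdiff hdiff2 hlam0 hroot
end

section
/- Let τ₀, u₀, ν, F > 0, r > 0, s ≥ 0, and c > 0, and set c_s := τ₀^{-3/2}/√F and df_* := ((s+1)/r)·(u₀/τ₀). There exists a nonzero real k satisfying 0 = (s+1)/τ₀ − cr/u₀ + ik(c² − c_s²) − cνk²/τ₀² if and only if c = c_s and df_* > c_s. Moreover, in that case the set of nonzero real solutions k is exactly {k_H, −k_H}, where k_H := √( (τ₀² r / (c_s ν u₀)) · (df_* − c_s) ). -/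
/-!
The symbol is `α + i k β - γ k²` with real `α = (s+1)/τ₀ - c r/u₀`, `β = c² - c_s²` and
`γ = c ν/τ₀² > 0`. Splitting it into real and imaginary parts, a nonzero real root forces `k β = 0`,
hence `β = 0`, i.e. `c = c_s`, and then `α = γ k² > 0`.
With `c = c_s` one has `α = (r / u₀) (df_* - c_s)`, so `α > 0` is the condition `df_* > c_s`, and the
roots are `k = ±√(α / γ) = ±k_H`.
-/

open Complex

lemma zero_eq_ofReal_add_I_mul_ofReal_iff (x y : ℝ) : (0 : ℂ) = x + I * y ↔ x = 0 ∧ y = 0 := by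
  simp [eq_comm, Complex.ext_iff]

section Symbol

variable {α β γ : ℝ}

lemma zero_eq_symbol_iff (k : ℝ) :
    (0 : ℂ) = α + I * k * β - γ * k ^ 2 ↔ α = γ * k ^ 2 ∧ k * β = 0 := by
  rw [show (α : ℂ) + I * k * β - γ * k ^ 2 = ((α - γ * k ^ 2 : ℝ) : ℂ) + I * ((k * β : ℝ) : ℂ) by
    push_cast; ring, zero_eq_ofReal_add_I_mul_ofReal_iff, sub_eq_zero]

lemma eq_mul_sq_iff (hγ : 0 < γ) (hα : 0 ≤ α) (k : ℝ) :
    α = γ * k ^ 2 ↔ k = √(α / γ) ∨ k = -√(α / γ) := by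
  rw [← sq_eq_sq_iff_eq_or_eq_neg, Real.sq_sqrt (div_nonneg hα hγ.le), eq_div_iff hγ.ne', mul_comm,
    eq_comm]

lemma exists_ne_zero_zero_eq_symbol_iff (hγ : 0 < γ) :
    (∃ k : ℝ, k ≠ 0 ∧ (0 : ℂ) = α + I * k * β - γ * k ^ 2) ↔ β = 0 ∧ 0 < α := by
  simp only [zero_eq_symbol_iff]
  constructor
  · rintro ⟨k, hk, hα, hkβ⟩
    exact ⟨(mul_eq_zero.1 hkβ).resolve_left hk, hα ▸ by positivity⟩
  · rintro ⟨rfl, hα⟩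
    refine ⟨√(α / γ), (Real.sqrt_pos.2 (div_pos hα hγ)).ne', ?_, mul_zero _⟩
    exact (eq_mul_sq_iff hγ hα.le _).2 (Or.inl rfl)

end Symbol

theorem stmt4_general (τ₀ u₀ ν F r s c : ℝ) (hτ₀ : 0 < τ₀) (hu₀ : 0 < u₀) (hν : 0 < ν)
    (hr : 0 < r) (hc : 0 < c)
    (cs : ℝ) (hcs : cs = τ₀ ^ (-(3 : ℝ) / 2) / Real.sqrt F)
    (df : ℝ) (hdf : df = ((s + 1) / r) * (u₀ / τ₀))
    (kH : ℝ) (hkH : kH = Real.sqrt ((τ₀ ^ 2 * r / (cs * ν * u₀)) * (df - cs))) :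
    ((∃ k : ℝ, k ≠ 0 ∧
        (0 : ℂ) = ((s : ℂ) + 1) / (τ₀ : ℂ) - (c : ℂ) * (r : ℂ) / (u₀ : ℂ)
          + Complex.I * (k : ℂ) * ((c : ℂ) ^ 2 - (cs : ℂ) ^ 2)
          - (c : ℂ) * (ν : ℂ) * (k : ℂ) ^ 2 / (τ₀ : ℂ) ^ 2)
      ↔ (c = cs ∧ df > cs))
    ∧ (c = cs → df > cs → ∀ k : ℝ, k ≠ 0 →
        (((0 : ℂ) = ((s : ℂ) + 1) / (τ₀ : ℂ) - (c : ℂ) * (r : ℂ) / (u₀ : ℂ)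
            + Complex.I * (k : ℂ) * ((c : ℂ) ^ 2 - (cs : ℂ) ^ 2)
            - (c : ℂ) * (ν : ℂ) * (k : ℂ) ^ 2 / (τ₀ : ℂ) ^ 2)
          ↔ (k = kH ∨ k = -kH))) := by
  set α := (s + 1) / τ₀ - c * r / u₀
  set γ := c * ν / τ₀ ^ 2
  have hγ : 0 < γ := by positivity
  have hcs₀ : 0 ≤ cs := hcs ▸ by positivity
  have hsymbol : ∀ k : ℝ, ((s : ℂ) + 1) / τ₀ - c * r / u₀ + I * k * (c ^ 2 - cs ^ 2)
      - c * ν * k ^ 2 / τ₀ ^ 2 = (α : ℂ) + I * k * ((c ^ 2 - cs ^ 2 : ℝ) : ℂ) - γ * k ^ 2 := by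
    intro k; simp only [α, γ]; push_cast; ring
  have hβ : c ^ 2 - cs ^ 2 = 0 ↔ c = cs := by
    rw [sub_eq_zero, sq_eq_sq₀ hc.le hcs₀]
  have hα : c = cs → α = r / u₀ * (df - cs) := by
    rintro rfl; simp only [α, hdf]; field_simp
  have hkH' : c = cs → kH = √(α / γ) := by
    rintro rfl; rw [hkH, hα rfl]; congr 1; simp only [γ]; field_simp
  simp only [hsymbol]
  refine ⟨?_, fun hccs hdfcs k _ => ?_⟩
  · rw [exists_ne_zero_zero_eq_symbol_iff hγ, hβ, and_congr_right_iff]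
    intro hccs
    rw [hα hccs, mul_pos_iff_of_pos_left (div_pos hr hu₀), sub_pos, gt_iff_lt]
  · have hα₀ : 0 ≤ α := hα hccs ▸ mul_nonneg (div_pos hr hu₀).le (sub_pos.2 hdfcs).le
    rw [zero_eq_symbol_iff, hβ.2 hccs, mul_zero, eq_self, and_true, eq_mul_sq_iff hγ hα₀, hkH' hccs]

/-- Hopf bifurcation conditions for the viscous St. Venant equations: the
Fourier symbol of the linearized profile equation has a nonzero real root `k`
iff `c = c_s` and `df_* > c_s`, in which case the roots are exactly `±k_H`. -/
theorem stmt4 (τ₀ u₀ ν F r s c : ℝ) (hτ₀ : 0 < τ₀) (hu₀ : 0 < u₀) (hν : 0 < ν)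
    (hF : 0 < F) (hr : 0 < r) (hs : 0 ≤ s) (hc : 0 < c)
    (cs : ℝ) (hcs : cs = τ₀ ^ (-(3 : ℝ) / 2) / Real.sqrt F)
    (df : ℝ) (hdf : df = ((s + 1) / r) * (u₀ / τ₀))
    (kH : ℝ) (hkH : kH = Real.sqrt ((τ₀ ^ 2 * r / (cs * ν * u₀)) * (df - cs))) :
    ((∃ k : ℝ, k ≠ 0 ∧
        (0 : ℂ) = ((s : ℂ) + 1) / (τ₀ : ℂ) - (c : ℂ) * (r : ℂ) / (u₀ : ℂ)
          + Complex.I * (k : ℂ) * ((c : ℂ) ^ 2 - (cs : ℂ) ^ 2)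
          - (c : ℂ) * (ν : ℂ) * (k : ℂ) ^ 2 / (τ₀ : ℂ) ^ 2)
      ↔ (c = cs ∧ df > cs))
    ∧ (c = cs → df > cs → ∀ k : ℝ, k ≠ 0 →
        (((0 : ℂ) = ((s : ℂ) + 1) / (τ₀ : ℂ) - (c : ℂ) * (r : ℂ) / (u₀ : ℂ)
            + Complex.I * (k : ℂ) * ((c : ℂ) ^ 2 - (cs : ℂ) ^ 2)
            - (c : ℂ) * (ν : ℂ) * (k : ℂ) ^ 2 / (τ₀ : ℂ) ^ 2)
          ↔ (k = kH ∨ k = -kH))) :=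
  stmt4_general τ₀ u₀ ν F r s c hτ₀ hu₀ hν hr hc cs hcs df hdf kH hkH
end

section
/- Let τ₀, u₀, ν, F > 0, r > 0, s ≥ 0, and c > 0, set c_s := τ₀^{-3/2}/√F and df_* := ((s+1)/r)·(u₀/τ₀), and let P(λ,k) := λ² + (r/u₀ − 2ick + νk²/τ₀²)·λ + ik·[(s+1)/τ₀ − cr/u₀ + ik(c² − c_s²) − cνk²/τ₀²]. Suppose that c·df_* ≤ c² or c² ≤ c_s². Then every pair of real numbers (λ, k) with P(λ, k) = 0 satisfies λ ≤ 0; that is, the dispersion relation has no positive real root at any real frequency. -/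
/-- If `c·df_* ≤ c²` or `c² ≤ c_s²`, then the dispersion relation of the
linearized viscous St. Venant equations has no positive real root at any real
frequency: the open positive real axis lies in the set of consistent splitting. -/
theorem stmt6 (τ₀ u₀ ν F r s c : ℝ) (hτ₀ : 0 < τ₀) (hu₀ : 0 < u₀) (hν : 0 < ν)
    (hF : 0 < F) (hr : 0 < r) (hs : 0 ≤ s) (hc : 0 < c)
    (cs : ℝ) (hcs : cs = τ₀ ^ (-(3 : ℝ) / 2) / Real.sqrt F)
    (df : ℝ) (hdf : df = ((s + 1) / r) * (u₀ / τ₀))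
    (P : ℂ → ℝ → ℂ)
    (hP : ∀ (lam : ℂ) (k : ℝ), P lam k =
      lam ^ 2
        + ((r : ℂ) / (u₀ : ℂ) - 2 * Complex.I * (c : ℂ) * (k : ℂ)
            + (ν : ℂ) * (k : ℂ) ^ 2 / (τ₀ : ℂ) ^ 2) * lam
        + Complex.I * (k : ℂ) *
            (((s : ℂ) + 1) / (τ₀ : ℂ) - (c : ℂ) * (r : ℂ) / (u₀ : ℂ)
              + Complex.I * (k : ℂ) * ((c : ℂ) ^ 2 - (cs : ℂ) ^ 2)
              - (c : ℂ) * (ν : ℂ) * (k : ℂ) ^ 2 / (τ₀ : ℂ) ^ 2))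
    (hcond : c * df ≤ c ^ 2 ∨ c ^ 2 ≤ cs ^ 2) :
    ∀ (lam k : ℝ), P (lam : ℂ) k = 0 → lam ≤ 0 := by
  intro lam k h
  by_contra hpos
  push_neg at hpos
  rw [hP] at h
  have h2 : ((lam ^ 2 + (r / u₀ + ν * k ^ 2 / τ₀ ^ 2) * lam
        - k ^ 2 * (c ^ 2 - cs ^ 2) : ℝ) : ℂ)
      + Complex.I * ((-(2 * c * k)) * lam
        + k * ((s + 1) / τ₀ - c * r / u₀ - c * ν * k ^ 2 / τ₀ ^ 2) : ℝ) = 0 := by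
    rw [← h]
    push_cast
    ring_nf
    rw [Complex.I_sq]
    ring
  rw [Complex.ext_iff] at h2
  simp only [Complex.add_re, Complex.add_im, Complex.ofReal_re, Complex.ofReal_im,
    Complex.mul_re, Complex.mul_im, Complex.I_re, Complex.I_im, Complex.zero_re,
    Complex.zero_im] at h2
  obtain ⟨hre, him⟩ := h2
  have hre : lam ^ 2 + (r / u₀ + ν * k ^ 2 / τ₀ ^ 2) * lam
      - k ^ 2 * (c ^ 2 - cs ^ 2) = 0 := by linarith
  have him : (-(2 * c * k)) * lam
      + k * ((s + 1) / τ₀ - c * r / u₀ - c * ν * k ^ 2 / τ₀ ^ 2) = 0 := by linarith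
  have ha : 0 < r / u₀ + ν * k ^ 2 / τ₀ ^ 2 := by positivity
  have hk : k ≠ 0 := by
    intro hk0
    subst hk0
    nlinarith
  have hk2 : 0 < k ^ 2 := by positivity
  have him2 : k * ((s + 1) / τ₀ - c * r / u₀ - c * ν * k ^ 2 / τ₀ ^ 2 - 2 * c * lam) = 0 := by
    linear_combination him
  have himm : (s + 1) / τ₀ - c * r / u₀ - c * ν * k ^ 2 / τ₀ ^ 2 - 2 * c * lam = 0 :=
    (mul_eq_zero.mp him2).resolve_left hk
  rcases hcond with hcond | hcond
  · -- c*df ≤ c² means (s+1)/τ₀ ≤ c*r/u₀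
    rw [hdf] at hcond
    have hA : (s + 1) / τ₀ ≤ c * r / u₀ := by
      rw [div_le_div_iff₀ hτ₀ hu₀]
      have h2 : c * (((s + 1) / r) * (u₀ / τ₀)) * (r * τ₀) ≤ c ^ 2 * (r * τ₀) :=
        mul_le_mul_of_nonneg_right hcond (le_of_lt (mul_pos hr hτ₀))
      have h3 : c * (((s + 1) / r) * (u₀ / τ₀)) * (r * τ₀) = c * ((s + 1) * u₀) := by
        field_simp
      rw [h3] at h2
      have h4 : c * ((s + 1) * u₀) ≤ c * (c * (r * τ₀)) := by
        have he : c ^ 2 * (r * τ₀) = c * (c * (r * τ₀)) := by ring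
        linarith
      have h5 : (s + 1) * u₀ ≤ c * (r * τ₀) := le_of_mul_le_mul_left h4 hc
      linarith [h5, (by ring : c * (r * τ₀) = c * r * τ₀)]
    have hp1 : 0 < 2 * c * lam := by positivity
    have hp2 : 0 < c * ν * k ^ 2 / τ₀ ^ 2 := by positivity
    linarith
  · -- c² ≤ cs²: real part gives contradiction
    have h1 : k ^ 2 * (c ^ 2 - cs ^ 2) ≤ 0 :=
      mul_nonpos_of_nonneg_of_nonpos hk2.le (by linarith)
    linarith [sq_nonneg lam, mul_pos ha hpos, h1, hre]
end

section
/- Let τ₀, u₀, ν, F > 0, r > 0, s ≥ 0, and c > 0, set c_s := τ₀^{-3/2}/√F and df_* := ((s+1)/r)·(u₀/τ₀), and let P(λ,k) := λ² + (r/u₀ − 2ick + νk²/τ₀²)·λ + ik·[(s+1)/τ₀ − cr/u₀ + ik(c² − c_s²) − cνk²/τ₀²]. Suppose c·(df_* − c) > 0 and c² > c_s². Then there exist a real number λ > 0 and a nonzero real number k such that P(λ, k) = 0; that is, the essential spectrum of the constant state intersects the open positive real axis. -/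
/-!
For real `λ` and `k` the dispersion relation splits into its real part
`λ² + (r/u₀ + νk²/τ₀²)λ − k²(c² − c_s²) = 0` and, after dividing by `k`, its imaginary part
`2cλ = a − b k²` with `a = (r/u₀)(df_* − c) > 0` and `b = cν/τ₀² > 0`. Eliminating `k²` by the
imaginary part turns the real part into a function of `λ` that is negative at `λ = 0` (as
`c² > c_s²`) and positive at `λ = a/(2c)`, where `k = 0`. A root strictly in between gives
`λ > 0` and `k² = (a − 2cλ)/b > 0`.
-/

open Set

theorem exists_pos_solution_dispersion_system {p q a b c d : ℝ} (hp : 0 ≤ p)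
    (ha : 0 < a) (hb : 0 < b) (hc : 0 < c) (hd : 0 < d) :
    ∃ lam k : ℝ, 0 < lam ∧ k ≠ 0 ∧
      lam ^ 2 + (p + q * k ^ 2) * lam - k ^ 2 * d = 0 ∧ 2 * c * lam = a - b * k ^ 2 := by
  set h : ℝ → ℝ := fun lam => lam ^ 2 + p * lam + (a - 2 * c * lam) / b * (q * lam - d)
  have hΛ : 0 < a / (2 * c) := by positivity
  have h_zero : h 0 < 0 := by
    have : h 0 = -(a / b * d) := by simp only [h]; ring
    rw [this, neg_lt_zero]
    positivity
  have h_Λ : 0 < h (a / (2 * c)) := by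
    have : a - 2 * c * (a / (2 * c)) = 0 := by field_simp; ring
    simp only [h, this, zero_div, zero_mul, add_zero]
    positivity
  have h_cont : ContinuousOn h (Icc 0 (a / (2 * c))) := by fun_prop
  obtain ⟨lam, ⟨hlam_pos, hlam_lt⟩, hlam_root⟩ :=
    intermediate_value_Ioo hΛ.le h_cont ⟨h_zero, h_Λ⟩
  have hk_sq_pos : 0 < (a - 2 * c * lam) / b := by
    apply div_pos _ hb
    rw [lt_div_iff₀ (by positivity)] at hlam_lt
    linarith
  set k := Real.sqrt ((a - 2 * c * lam) / b)
  have hk_sq : k ^ 2 = (a - 2 * c * lam) / b := Real.sq_sqrt hk_sq_pos.le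
  refine ⟨lam, k, hlam_pos, (Real.sqrt_pos.2 hk_sq_pos).ne', ?_, ?_⟩
  · rw [← hlam_root, hk_sq]
    ring
  · rw [hk_sq]
    field_simp
    ring

theorem stmt7_general (τ₀ u₀ ν r s c : ℝ) (hτ₀ : 0 < τ₀) (hu₀ : 0 < u₀) (hν : 0 < ν)
    (hr : 0 < r) (hc : 0 < c)
    (cs : ℝ)
    (df : ℝ) (hdf : df = ((s + 1) / r) * (u₀ / τ₀))
    (P : ℂ → ℝ → ℂ)
    (hP : ∀ (lam : ℂ) (k : ℝ), P lam k =
      lam ^ 2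
        + ((r : ℂ) / (u₀ : ℂ) - 2 * Complex.I * (c : ℂ) * (k : ℂ)
            + (ν : ℂ) * (k : ℂ) ^ 2 / (τ₀ : ℂ) ^ 2) * lam
        + Complex.I * (k : ℂ) *
            (((s : ℂ) + 1) / (τ₀ : ℂ) - (c : ℂ) * (r : ℂ) / (u₀ : ℂ)
              + Complex.I * (k : ℂ) * ((c : ℂ) ^ 2 - (cs : ℂ) ^ 2)
              - (c : ℂ) * (ν : ℂ) * (k : ℂ) ^ 2 / (τ₀ : ℂ) ^ 2))
    (hcond1 : c * (df - c) > 0) (hcond2 : c ^ 2 > cs ^ 2) :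
    ∃ (lam : ℝ), 0 < lam ∧ ∃ k : ℝ, k ≠ 0 ∧ P (lam : ℂ) k = 0 := by
  have ha : 0 < (s + 1) / τ₀ - c * r / u₀ := by
    have h_eq : (s + 1) / τ₀ - c * r / u₀ = r / u₀ * (df - c) := by
      rw [hdf]; field_simp
    rw [h_eq]
    exact mul_pos (by positivity) (pos_of_mul_pos_right hcond1 hc.le)
  obtain ⟨lam, k, hlam, hk, h_re, h_im⟩ :=
    exists_pos_solution_dispersion_system (p := r / u₀) (q := ν / τ₀ ^ 2)
      (b := c * ν / τ₀ ^ 2) (d := c ^ 2 - cs ^ 2) (by positivity) ha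
      (by positivity) hc (by linarith)
  refine ⟨lam, hlam, k, hk, ?_⟩
  have h_re' := congrArg Complex.ofReal h_re
  have h_im' := congrArg Complex.ofReal h_im
  push_cast at h_re' h_im'
  rw [hP]
  linear_combination h_re' - Complex.I * k * h_im'
    + ((k : ℂ) ^ 2 * ((c : ℂ) ^ 2 - (cs : ℂ) ^ 2)) * Complex.I_sq

/-- If `c·(df_* − c) > 0` and `c² > c_s²`, then the dispersion relation of the
linearized viscous St. Venant equations has a positive real root at some nonzero
real frequency: the essential spectrum of the constant state intersects the open
positive real axis. -/
theorem stmt7 (τ₀ u₀ ν F r s c : ℝ) (hτ₀ : 0 < τ₀) (hu₀ : 0 < u₀) (hν : 0 < ν)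
    (hF : 0 < F) (hr : 0 < r) (hs : 0 ≤ s) (hc : 0 < c)
    (cs : ℝ) (hcs : cs = τ₀ ^ (-(3 : ℝ) / 2) / Real.sqrt F)
    (df : ℝ) (hdf : df = ((s + 1) / r) * (u₀ / τ₀))
    (P : ℂ → ℝ → ℂ)
    (hP : ∀ (lam : ℂ) (k : ℝ), P lam k =
      lam ^ 2
        + ((r : ℂ) / (u₀ : ℂ) - 2 * Complex.I * (c : ℂ) * (k : ℂ)
            + (ν : ℂ) * (k : ℂ) ^ 2 / (τ₀ : ℂ) ^ 2) * lam
        + Complex.I * (k : ℂ) *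
            (((s : ℂ) + 1) / (τ₀ : ℂ) - (c : ℂ) * (r : ℂ) / (u₀ : ℂ)
              + Complex.I * (k : ℂ) * ((c : ℂ) ^ 2 - (cs : ℂ) ^ 2)
              - (c : ℂ) * (ν : ℂ) * (k : ℂ) ^ 2 / (τ₀ : ℂ) ^ 2))
    (hcond1 : c * (df - c) > 0) (hcond2 : c ^ 2 > cs ^ 2) :
    ∃ (lam : ℝ), 0 < lam ∧ ∃ k : ℝ, k ≠ 0 ∧ P (lam : ℂ) k = 0 :=
  stmt7_general τ₀ u₀ ν r s c hτ₀ hu₀ hν hr hc cs df hdf P hP hcond1 hcond2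
end

section
/- Let τ₀, u₀, ν, F > 0, r > 0, s ≥ 0, set c_s := τ₀^{-3/2}/√F and df_* := ((s+1)/r)·(u₀/τ₀), assume df_* > c_s, take c = c_s, and let k_H := √( (τ₀² r / (c_s ν u₀)) · (df_* − c_s) ). Let P(λ,k) := λ² + (r/u₀ − 2ic_s k + νk²/τ₀²)·λ + ik·[(s+1)/τ₀ − c_s r/u₀ − c_s νk²/τ₀²]. Suppose λ : ℝ → ℂ is differentiable at k_H, λ(k_H) = 0, and P(λ(k), k) = 0 for all k in a neighborhood of k_H. Then λ'(k_H) = (2 c_s ν / τ₀²) · i k_H² / (r/u₀ + νk_H²/τ₀² − 2i c_s k_H), and λ'(k_H) is not purely imaginary, i.e. Re λ'(k_H) ≠ 0. -/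
/-!
Differentiate `P(λ(k), k) = 0` at `k_H`. Since `λ(k_H) = 0`, only `b(k_H) λ'(k_H)` and the
`k`-derivative of the constant coefficient `i k d(k)` survive, where `b` is the coefficient of `λ`
and `d(k) = (s+1)/τ₀ - c_s r/u₀ - c_s ν k²/τ₀²`. The Hopf frequency is defined so that
`d(k_H) = 0`, hence that derivative is `i k_H d'(k_H) = -2i c_s ν k_H²/τ₀²`, and
`λ'(k_H) = 2i c_s ν k_H²/τ₀² / b(k_H)`: a purely imaginary number divided by `b(k_H)`, whose
imaginary part `-2 c_s k_H` does not vanish, so `Re λ'(k_H) ≠ 0`.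
-/

open Filter Topology Complex

section ImplicitDerivative

variable {𝕜 𝔸 : Type*} [NontriviallyNormedField 𝕜] [NormedCommRing 𝔸] [NormedAlgebra 𝕜 𝔸]
  {x : 𝕜}

theorem HasDerivAt.mul_of_eq_zero_right {f d : 𝕜 → 𝔸} {f' d' : 𝔸} (hf : HasDerivAt f f' x)
    (hd : HasDerivAt d d' x) (hdx : d x = 0) :
    HasDerivAt (fun y => f y * d y) (f x * d') x := by
  simpa [hdx] using hf.fun_mul hd

theorem HasDerivAt.mul_add_eq_zero_of_eventually_sq_add_mul_add_eq_zero {l b c : 𝕜 → 𝔸}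
    {l' c' : 𝔸} (hl : HasDerivAt l l' x) (hb : DifferentiableAt 𝕜 b x) (hc : HasDerivAt c c' x)
    (hlx : l x = 0) (hroot : ∀ᶠ y in 𝓝 x, l y ^ 2 + b y * l y + c y = 0) :
    b x * l' + c' = 0 := by
  have hP : HasDerivAt (fun y => l y ^ 2 + b y * l y + c y) (b x * l' + c') x := by
    simpa [hlx] using ((hl.fun_pow 2).fun_add (hb.hasDerivAt.fun_mul hl)).fun_add hc
  exact hP.unique ((hasDerivAt_const x 0).congr_of_eventuallyEq hroot)

end ImplicitDerivative

theorem HasDerivAt.mul_eq_of_eventually_dispersion_eq_zero {lam b : ℝ → ℂ} {l' : ℂ} {x : ℝ}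
    {α β : ℂ} (hl : HasDerivAt lam l' x) (hb : DifferentiableAt ℝ b x) (hlx : lam x = 0)
    (hα : α - β * (x : ℂ) ^ 2 = 0)
    (hroot : ∀ᶠ k in 𝓝 x, lam k ^ 2 + b k * lam k + I * k * (α - β * (k : ℂ) ^ 2) = 0) :
    b x * l' = 2 * I * β * (x : ℂ) ^ 2 := by
  have hd : HasDerivAt (fun k : ℝ => α - β * (k : ℂ) ^ 2) (-(2 * β * x)) x :=
    (((hasDerivAt_pow 2 (x : ℂ)).const_mul β).const_sub α).comp_ofReal.congr_deriv (by ring)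
  have hc := (((hasDerivAt_id' (x : ℂ)).const_mul I).comp_ofReal).mul_of_eq_zero_right hd hα
  linear_combination hl.mul_add_eq_zero_of_eventually_sq_add_mul_add_eq_zero hb hc hlx hroot

theorem Complex.re_div_ne_zero {z w : ℂ} (hz : z.re = 0) (hz' : z.im ≠ 0) (hw : w.im ≠ 0) :
    (z / w).re ≠ 0 := by
  have hw0 : w ≠ 0 := fun h => hw (by simp [h])
  rw [Complex.div_re, hz, zero_mul, zero_div, zero_add]
  exact div_ne_zero (mul_ne_zero hz' hw) (Complex.normSq_pos.mpr hw0).ne'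

theorem sub_sub_eq_zero_at_hopfFrequency {τ₀ u₀ ν r s cs k : ℝ} (hτ₀ : τ₀ ≠ 0)
    (hu₀ : u₀ ≠ 0) (hν : ν ≠ 0) (hr : r ≠ 0) (hcs : cs ≠ 0)
    (hk : k ^ 2 = τ₀ ^ 2 * r / (cs * ν * u₀) * ((s + 1) / r * (u₀ / τ₀) - cs)) :
    (s + 1) / τ₀ - cs * r / u₀ - cs * ν * k ^ 2 / τ₀ ^ 2 = 0 := by
  rw [hk]
  field_simp
  ring

theorem stmt8_general (τ₀ u₀ ν F r s : ℝ) (hτ₀ : 0 < τ₀) (hu₀ : 0 < u₀) (hν : 0 < ν)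
    (hF : 0 < F) (hr : 0 < r)
    (cs : ℝ) (hcs : cs = τ₀ ^ (-(3 : ℝ) / 2) / Real.sqrt F)
    (df : ℝ) (hdf : df = ((s + 1) / r) * (u₀ / τ₀)) (hsub : df > cs)
    (kH : ℝ) (hkH : kH = Real.sqrt ((τ₀ ^ 2 * r / (cs * ν * u₀)) * (df - cs)))
    (P : ℂ → ℝ → ℂ)
    (hP : ∀ (lam : ℂ) (k : ℝ), P lam k =
      lam ^ 2
        + ((r : ℂ) / (u₀ : ℂ) - 2 * Complex.I * (cs : ℂ) * (k : ℂ)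
            + (ν : ℂ) * (k : ℂ) ^ 2 / (τ₀ : ℂ) ^ 2) * lam
        + Complex.I * (k : ℂ) *
            (((s : ℂ) + 1) / (τ₀ : ℂ) - (cs : ℂ) * (r : ℂ) / (u₀ : ℂ)
              - (cs : ℂ) * (ν : ℂ) * (k : ℂ) ^ 2 / (τ₀ : ℂ) ^ 2))
    (lam : ℝ → ℂ)
    (hdiff : DifferentiableAt ℝ lam kH)
    (hlamkH : lam kH = 0)
    (hroot : ∀ᶠ k in nhds kH, P (lam k) k = 0) :
    deriv lam kH
      = (2 * (cs : ℂ) * (ν : ℂ) / (τ₀ : ℂ) ^ 2) * (Complex.I * (kH : ℂ) ^ 2)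
          / ((r : ℂ) / (u₀ : ℂ) + (ν : ℂ) * (kH : ℂ) ^ 2 / (τ₀ : ℂ) ^ 2
              - 2 * Complex.I * (cs : ℂ) * (kH : ℂ))
    ∧ (deriv lam kH).re ≠ 0 := by
  have hcs0 : 0 < cs := hcs ▸ by positivity
  have hkH_sq_pos : 0 < τ₀ ^ 2 * r / (cs * ν * u₀) * (df - cs) := by
    have := sub_pos.mpr hsub
    positivity
  have hkH0 : 0 < kH := hkH ▸ Real.sqrt_pos.mpr hkH_sq_pos
  have hconst : ((s : ℂ) + 1) / τ₀ - cs * r / u₀ - cs * ν * (kH : ℂ) ^ 2 / τ₀ ^ 2 = 0 := by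
    exact_mod_cast sub_sub_eq_zero_at_hopfFrequency hτ₀.ne' hu₀.ne' hν.ne' hr.ne' hcs0.ne'
      (by rw [hkH, Real.sq_sqrt hkH_sq_pos.le, hdf])
  have himplicit := hdiff.hasDerivAt.mul_eq_of_eventually_dispersion_eq_zero
    (b := fun k : ℝ => (r : ℂ) / u₀ - 2 * I * cs * k + ν * (k : ℂ) ^ 2 / τ₀ ^ 2)
    (α := ((s : ℂ) + 1) / τ₀ - cs * r / u₀) (β := cs * ν / τ₀ ^ 2) (by fun_prop) hlamkH
    (by linear_combination hconst)
    (by filter_upwards [hroot] with k hk; rw [hP] at hk; linear_combination hk)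
  have hden_im : ((r : ℂ) / u₀ + ν * (kH : ℂ) ^ 2 / τ₀ ^ 2 - 2 * I * cs * kH).im ≠ 0 := by
    simp [← ofReal_pow, ← ofReal_mul, ← ofReal_div, hcs0.ne', hkH0.ne']
  have hden : (r : ℂ) / u₀ + ν * (kH : ℂ) ^ 2 / τ₀ ^ 2 - 2 * I * cs * kH ≠ 0 :=
    fun h => hden_im (by rw [h, zero_im])
  have hformula : deriv lam kH = 2 * cs * ν / τ₀ ^ 2 * (I * kH ^ 2)
      / (r / u₀ + ν * kH ^ 2 / τ₀ ^ 2 - 2 * I * cs * kH) := by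
    rw [eq_div_iff hden]
    linear_combination himplicit
  refine ⟨hformula, hformula ▸ Complex.re_div_ne_zero ?_ ?_ hden_im⟩
  · simp [← ofReal_pow, ← ofReal_ofNat, ← ofReal_mul, ← ofReal_div]
  · simp [← ofReal_pow, ← ofReal_ofNat, ← ofReal_mul, ← ofReal_div, hcs0.ne', hν.ne', hτ₀.ne',
      hkH0.ne']

/-- Transversality at the Hopf bifurcation for the viscous St. Venant
equations: at `c = c_s`, the root of the dispersion relation vanishing at the
Hopf frequency `k_H` satisfies
`λ'(k_H) = (2c_sν/τ₀²)·ik_H²/(r/u₀ + νk_H²/τ₀² − 2ic_sk_H)`, which is not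
purely imaginary. -/
theorem stmt8 (τ₀ u₀ ν F r s : ℝ) (hτ₀ : 0 < τ₀) (hu₀ : 0 < u₀) (hν : 0 < ν)
    (hF : 0 < F) (hr : 0 < r) (hs : 0 ≤ s)
    (cs : ℝ) (hcs : cs = τ₀ ^ (-(3 : ℝ) / 2) / Real.sqrt F)
    (df : ℝ) (hdf : df = ((s + 1) / r) * (u₀ / τ₀)) (hsub : df > cs)
    (kH : ℝ) (hkH : kH = Real.sqrt ((τ₀ ^ 2 * r / (cs * ν * u₀)) * (df - cs)))
    (P : ℂ → ℝ → ℂ)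
    (hP : ∀ (lam : ℂ) (k : ℝ), P lam k =
      lam ^ 2
        + ((r : ℂ) / (u₀ : ℂ) - 2 * Complex.I * (cs : ℂ) * (k : ℂ)
            + (ν : ℂ) * (k : ℂ) ^ 2 / (τ₀ : ℂ) ^ 2) * lam
        + Complex.I * (k : ℂ) *
            (((s : ℂ) + 1) / (τ₀ : ℂ) - (cs : ℂ) * (r : ℂ) / (u₀ : ℂ)
              - (cs : ℂ) * (ν : ℂ) * (k : ℂ) ^ 2 / (τ₀ : ℂ) ^ 2))
    (lam : ℝ → ℂ)
    (hdiff : DifferentiableAt ℝ lam kH)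
    (hlamkH : lam kH = 0)
    (hroot : ∀ᶠ k in nhds kH, P (lam k) k = 0) :
    deriv lam kH
      = (2 * (cs : ℂ) * (ν : ℂ) / (τ₀ : ℂ) ^ 2) * (Complex.I * (kH : ℂ) ^ 2)
          / ((r : ℂ) / (u₀ : ℂ) + (ν : ℂ) * (kH : ℂ) ^ 2 / (τ₀ : ℂ) ^ 2
              - 2 * Complex.I * (cs : ℂ) * (kH : ℂ))
    ∧ (deriv lam kH).re ≠ 0 :=
  stmt8_general τ₀ u₀ ν F r s hτ₀ hu₀ hν hF hr cs hcs df hdf hsub kH hkH P hP lam hdiff hlamkH hroot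
end

section
/- Let s ≥ 0, r ≥ 1, c, q ∈ ℝ, and define g_*(τ) := 1 − τ^{s+1}·(q − cτ)^r for τ in an open interval I on which τ > 0 and q − cτ > 0, and define df_*(τ) := ((s+1)/r)·(q − cτ)/τ. Suppose τ₁ < τ₂ in I satisfy g_*(τ₁) = g_*(τ₂) = 0, g_*(τ) ≠ 0 for all τ ∈ (τ₁, τ₂), and df_*(τᵢ) ≠ c for i = 1, 2. Then (df_*(τ₁) − c)·(df_*(τ₂) − c) < 0; that is, the sign of df_* − c alternates among consecutive nondegenerate equilibria of the traveling-wave ODE. -/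
/-!
At a zero of `g_*` one has `τ^{s+1} (q − cτ)^r = 1`, so the logarithmic derivative of
`τ^{s+1}(q − cτ)^r` gives `g_*'(τ) = −(r / (q − cτ)) · (df_*(τ) − c)` with a positive factor
`r / (q − cτ)`. The claim is therefore that `g_*'` has opposite signs at two consecutive simple
zeros, which holds for any differentiable function: `g_*` has a constant sign between them, and
the one-sided difference quotients at the two ends have opposite signs.
-/

open Set Filter Topology

theorem IsPreconnected.forall_pos_or_forall_neg {X α : Type*} [TopologicalSpace X]
    [LinearOrder α] [TopologicalSpace α] [OrderClosedTopology α] [Zero α]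
    {s : Set X} {f : X → α} (hs : IsPreconnected s) (hf : ContinuousOn f s)
    (hne : ∀ x ∈ s, f x ≠ 0) : (∀ x ∈ s, 0 < f x) ∨ ∀ x ∈ s, f x < 0 := by
  by_contra! h
  obtain ⟨⟨x, hx, hfx⟩, ⟨y, hy, hfy⟩⟩ := h
  obtain ⟨z, hz, hfz⟩ := hs.intermediate_value hx hy hf ⟨hfx, hfy⟩
  exact hne z hz hfz

section EndpointDerivatives

variable {f : ℝ → ℝ} {f' a b : ℝ}

theorem HasDerivAt.nonneg_of_le_on_Ioo (hf : HasDerivAt f f' a) (hab : a < b)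
    (hmin : ∀ x ∈ Ioo a b, f a ≤ f x) : 0 ≤ f' := by
  have hlim : Tendsto (slope f a) (𝓝[>] a) (𝓝 f') :=
    (hasDerivAt_iff_tendsto_slope.1 hf).mono_left (nhdsWithin_mono _ fun _ hx => ne_of_gt hx)
  refine ge_of_tendsto hlim ?_
  filter_upwards [Ioo_mem_nhdsGT hab] with x hx
  rw [slope_def_field]
  exact div_nonneg (sub_nonneg.2 (hmin x hx)) (sub_nonneg.2 hx.1.le)

theorem HasDerivAt.nonpos_of_le_on_Ioo (hf : HasDerivAt f f' b) (hab : a < b)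
    (hmin : ∀ x ∈ Ioo a b, f b ≤ f x) : f' ≤ 0 := by
  have hlim : Tendsto (slope f b) (𝓝[<] b) (𝓝 f') :=
    (hasDerivAt_iff_tendsto_slope.1 hf).mono_left (nhdsWithin_mono _ fun _ hx => ne_of_lt hx)
  refine le_of_tendsto hlim ?_
  filter_upwards [Ioo_mem_nhdsLT hab] with x hx
  rw [slope_def_field]
  exact div_nonpos_of_nonneg_of_nonpos (sub_nonneg.2 (hmin x hx)) (sub_nonpos.2 hx.2.le)

end EndpointDerivatives

theorem mul_nonpos_of_hasDerivAt_of_pos_on_Ioo {f : ℝ → ℝ} {a b f'a f'b : ℝ} (hab : a < b)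
    (ha : HasDerivAt f f'a a) (hb : HasDerivAt f f'b b) (hfa : f a = 0) (hfb : f b = 0)
    (hpos : ∀ x ∈ Ioo a b, 0 < f x) : f'a * f'b ≤ 0 :=
  mul_nonpos_of_nonneg_of_nonpos
    (ha.nonneg_of_le_on_Ioo hab fun x hx => hfa ▸ (hpos x hx).le)
    (hb.nonpos_of_le_on_Ioo hab fun x hx => hfb ▸ (hpos x hx).le)

theorem mul_neg_of_hasDerivAt_of_consecutive_zeros {f : ℝ → ℝ} {a b f'a f'b : ℝ} (hab : a < b)
    (hf : ContinuousOn f (Ioo a b)) (ha : HasDerivAt f f'a a) (hb : HasDerivAt f f'b b)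
    (hfa : f a = 0) (hfb : f b = 0) (hne : ∀ x ∈ Ioo a b, f x ≠ 0)
    (h'a : f'a ≠ 0) (h'b : f'b ≠ 0) : f'a * f'b < 0 := by
  refine lt_of_le_of_ne ?_ (mul_ne_zero h'a h'b)
  rcases isPreconnected_Ioo.forall_pos_or_forall_neg hf hne with hpos | hneg
  · exact mul_nonpos_of_hasDerivAt_of_pos_on_Ioo hab ha hb hfa hfb hpos
  · simpa using mul_nonpos_of_hasDerivAt_of_pos_on_Ioo hab ha.neg hb.neg
      (by simp [hfa]) (by simp [hfb]) fun x hx => neg_pos.2 (hneg x hx)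

namespace StVenant

variable (s r c q : ℝ)

noncomputable def gStar (τ : ℝ) : ℝ := 1 - τ ^ (s + 1) * (q - c * τ) ^ r

noncomputable def dfStar (τ : ℝ) : ℝ := (s + 1) / r * ((q - c * τ) / τ)

variable {s r c q}

theorem hasDerivAt_gStar {τ : ℝ} (hr : r ≠ 0) (hτ : 0 < τ) (hu : 0 < q - c * τ) :
    HasDerivAt (gStar s r c q)
      (-(τ ^ (s + 1) * (q - c * τ) ^ r) * (r / (q - c * τ)) * (dfStar s r c q τ - c)) τ := by
  have hpow : HasDerivAt (fun t : ℝ => t ^ (s + 1)) ((s + 1) * τ ^ s) τ := by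
    simpa using Real.hasDerivAt_rpow_const (p := s + 1) (Or.inl hτ.ne')
  have hlin : HasDerivAt (fun t : ℝ => q - c * t) (-c) τ := by
    simpa using ((hasDerivAt_id τ).const_mul c).const_sub q
  have hpow' : HasDerivAt (fun t : ℝ => (q - c * t) ^ r) (-c * r * (q - c * τ) ^ (r - 1)) τ :=
    hlin.rpow_const (Or.inl hu.ne')
  refine ((hpow.mul hpow').const_sub 1).congr_deriv ?_
  have hτs : τ ^ (s + 1) = τ ^ s * τ := Real.rpow_add_one hτ.ne' s
  have hur : (q - c * τ) ^ r = (q - c * τ) ^ (r - 1) * (q - c * τ) := by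
    simpa using Real.rpow_add_one hu.ne' (r - 1)
  rw [dfStar, hτs, hur]
  field_simp
  ring

theorem hasDerivAt_gStar_of_eq_zero {τ : ℝ} (hr : r ≠ 0) (hτ : 0 < τ) (hu : 0 < q - c * τ)
    (hz : gStar s r c q τ = 0) :
    HasDerivAt (gStar s r c q) (-(r / (q - c * τ)) * (dfStar s r c q τ - c)) τ := by
  have hprod : τ ^ (s + 1) * (q - c * τ) ^ r = 1 := by
    rw [gStar] at hz
    linarith
  simpa only [hprod, neg_one_mul] using hasDerivAt_gStar (s := s) hr hτ hu

end StVenant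

open StVenant in
theorem stmt12_general (s r c q : ℝ) (hr : 1 ≤ r)
    (a b : ℝ)
    (hpos : ∀ τ ∈ Set.Ioo a b, 0 < τ ∧ 0 < q - c * τ)
    (gstar dfstar : ℝ → ℝ)
    (hg : ∀ τ, gstar τ = 1 - τ ^ (s + 1) * (q - c * τ) ^ r)
    (hdf : ∀ τ, dfstar τ = ((s + 1) / r) * ((q - c * τ) / τ))
    (τ₁ τ₂ : ℝ) (h12 : τ₁ < τ₂)
    (h1 : τ₁ ∈ Set.Ioo a b) (h2 : τ₂ ∈ Set.Ioo a b)
    (hz1 : gstar τ₁ = 0) (hz2 : gstar τ₂ = 0)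
    (hnz : ∀ τ ∈ Set.Ioo τ₁ τ₂, gstar τ ≠ 0)
    (hne1 : dfstar τ₁ ≠ c) (hne2 : dfstar τ₂ ≠ c) :
    (dfstar τ₁ - c) * (dfstar τ₂ - c) < 0 := by
  obtain rfl : gstar = gStar s r c q := funext hg
  obtain rfl : dfstar = dfStar s r c q := funext hdf
  have hr0 : 0 < r := one_pos.trans_le hr
  have hcont : ContinuousOn (gStar s r c q) (Ioo τ₁ τ₂) := fun τ hτ =>
    have hτab : τ ∈ Ioo a b := ⟨h1.1.trans hτ.1, hτ.2.trans h2.2⟩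
    (hasDerivAt_gStar hr0.ne' (hpos τ hτab).1 (hpos τ hτab).2).continuousAt.continuousWithinAt
  have hk1 : 0 < r / (q - c * τ₁) := div_pos hr0 (hpos τ₁ h1).2
  have hk2 : 0 < r / (q - c * τ₂) := div_pos hr0 (hpos τ₂ h2).2
  have hderiv := mul_neg_of_hasDerivAt_of_consecutive_zeros h12 hcont
    (hasDerivAt_gStar_of_eq_zero hr0.ne' (hpos τ₁ h1).1 (hpos τ₁ h1).2 hz1)
    (hasDerivAt_gStar_of_eq_zero hr0.ne' (hpos τ₂ h2).1 (hpos τ₂ h2).2 hz2) hz1 hz2 hnz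
    (mul_ne_zero (neg_ne_zero.2 hk1.ne') (sub_ne_zero.2 hne1))
    (mul_ne_zero (neg_ne_zero.2 hk2.ne') (sub_ne_zero.2 hne2))
  refine neg_of_mul_neg_right (a := r / (q - c * τ₁) * (r / (q - c * τ₂))) ?_ (by positivity)
  linarith

/-- Alternation of equilibria of the St. Venant traveling-wave ODE: at two
consecutive nondegenerate zeros of `g_*(τ) = 1 − τ^{s+1}(q − cτ)^r` in an open
interval where `τ > 0` and `q − cτ > 0`, the quantity `df_*(τ) − c` changes
sign. -/
theorem stmt12 (s r c q : ℝ) (hs : 0 ≤ s) (hr : 1 ≤ r)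
    (a b : ℝ) (hab : a < b)
    (hpos : ∀ τ ∈ Set.Ioo a b, 0 < τ ∧ 0 < q - c * τ)
    (gstar dfstar : ℝ → ℝ)
    (hg : ∀ τ, gstar τ = 1 - τ ^ (s + 1) * (q - c * τ) ^ r)
    (hdf : ∀ τ, dfstar τ = ((s + 1) / r) * ((q - c * τ) / τ))
    (τ₁ τ₂ : ℝ) (h12 : τ₁ < τ₂)
    (h1 : τ₁ ∈ Set.Ioo a b) (h2 : τ₂ ∈ Set.Ioo a b)
    (hz1 : gstar τ₁ = 0) (hz2 : gstar τ₂ = 0)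
    (hnz : ∀ τ ∈ Set.Ioo τ₁ τ₂, gstar τ ≠ 0)
    (hne1 : dfstar τ₁ ≠ c) (hne2 : dfstar τ₂ ≠ c) :
    (dfstar τ₁ - c) * (dfstar τ₂ - c) < 0 :=
  stmt12_general s r c q hr a b hpos gstar dfstar hg hdf τ₁ τ₂ h12 h1 h2 hz1 hz2 hnz hne1 hne2
end

section
/- Let m, n ≥ 1 and let E₋ := ℂ^m and E₊ := ℂ^n with their standard Hermitian inner products ⟨·,·⟩ and norms ‖·‖. Let M₋, Θ₋₋ : ℝ → (E₋ →L E₋), Θ₋₊ : ℝ → (E₊ →L E₋), Θ₊₋ : ℝ → (E₋ →L E₊), and M₊, Θ₊₊ : ℝ → (E₊ →L E₊) be continuous, and let c₋, c₊, δ, θ₋₋, θ₋₊, θ₊₋, θ₊₊ be real constants with θᵢⱼ ≥ 0, θ₊₋, θ₋₊ > 0, such that for all x ∈ ℝ: Re⟨M₋(x)v, v⟩ ≤ c₋‖v‖² for all v ∈ E₋; Re⟨M₊(x)w, w⟩ ≥ c₊‖w‖² for all w ∈ E₊; the operator norms satisfy ‖Θᵢⱼ(x)‖ ≤ θᵢⱼ;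 and c₊ − c₋ ≥ δ > θ₋₋ + θ₊₊ + 2√(θ₋₊θ₊₋). Let z > 0 satisfy θ₊₋z² − (δ − θ₋₋ − θ₊₊)z + θ₋₊ < 0. Suppose W₋ : ℝ → E₋ and W₊ : ℝ → E₊ are differentiable and satisfy W₋'(x) = M₋(x)W₋(x) + Θ₋₋(x)W₋(x) + Θ₋₊(x)W₊(x) and W₊'(x) = M₊(x)W₊(x) + Θ₊₋(x)W₋(x) + Θ₊₊(x)W₊(x) for all x. If ‖W₋(x₀)‖ ≤ z·‖W₊(x₀)‖ for some x₀, then ‖W₋(x)‖ ≤ z·‖W₊(x)‖ for all x ≥ x₀. -/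
/-!
Write `u = ‖W₋‖ - z‖W₊‖`. Although the norms are not differentiable where `W₋` or `W₊` vanishes,
they always have right derivatives, and the dissipativity bounds on `M₋`, `M₊` together with the
operator-norm bounds on the `Θᵢⱼ` give `D⁺u ≤ K u + Q(z) ‖W₊‖` with `K = c₋ + θ₋₋ + zθ₊₋` and
`Q(z) = θ₊₋z² - (c₊ - c₋ - θ₋₋ - θ₊₊)z + θ₋₊ ≤ 0`. Hence `D⁺u ≤ K u`, and Gronwall's inequality
keeps `u ≤ 0` once `u(x₀) ≤ 0`.
-/

open Set Asymptotics RCLike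
open scoped InnerProductSpace

section NormRightDeriv

variable {𝕜 E : Type*} [RCLike 𝕜] [NormedAddCommGroup E] [InnerProductSpace 𝕜 E]

variable (𝕜) in
open scoped Classical in
/-- The right derivative of `‖f‖` at a point where `f = v` and `f' = d`; at `v = 0` the norm is
not differentiable but still has the one-sided derivative `‖d‖`. -/
noncomputable def normRightDeriv (v d : E) : ℝ :=
  if v = 0 then ‖d‖ else re ⟪d, v⟫_𝕜 / ‖v‖

theorem normRightDeriv_le {A : E →L[𝕜] E} {k : ℝ} (hA : ∀ w, re ⟪A w, w⟫_𝕜 ≤ k * ‖w‖ ^ 2)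
    (v r : E) : normRightDeriv 𝕜 v (A v + r) ≤ k * ‖v‖ + ‖r‖ := by
  unfold normRightDeriv
  split_ifs with h0
  · simp [h0]
  · have hpos : 0 < ‖v‖ := norm_pos_iff.2 h0
    rw [div_le_iff₀ hpos, inner_add_left, map_add]
    nlinarith [hA v, re_inner_le_norm (𝕜 := 𝕜) r v]

theorem le_normRightDeriv {A : E →L[𝕜] E} {k : ℝ} (hA : ∀ w, k * ‖w‖ ^ 2 ≤ re ⟪A w, w⟫_𝕜)
    (v r : E) : k * ‖v‖ - ‖r‖ ≤ normRightDeriv 𝕜 v (A v + r) := by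
  unfold normRightDeriv
  split_ifs with h0
  · simp [h0]
  · have hpos : 0 < ‖v‖ := norm_pos_iff.2 h0
    rw [le_div_iff₀ hpos, inner_add_left, map_add]
    have hr := re_inner_le_norm (𝕜 := 𝕜) (-r) v
    rw [inner_neg_left, map_neg, norm_neg] at hr
    nlinarith [hA v]

variable [NormedSpace ℝ E] {f : ℝ → E} {d : E} {x : ℝ}

theorem HasDerivAt.norm_of_ne_zero (hf : HasDerivAt f d x) (h0 : f x ≠ 0) :
    HasDerivAt (‖f ·‖) (re ⟪d, f x⟫_𝕜 / ‖f x‖) x := by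
  have hsq := reCLM.hasFDerivAt.comp_hasDerivAt x (hf.inner 𝕜 hf)
  simp only [Function.comp_def, reCLM_apply, inner_self_eq_norm_sq, map_add,
    inner_re_symm (f x) d] at hsq
  have hpos : 0 < ‖f x‖ := norm_pos_iff.2 h0
  have := hsq.sqrt (by positivity)
  simp only [Real.sqrt_sq (norm_nonneg _)] at this
  convert this using 1
  field_simp
  ring

theorem HasDerivAt.hasDerivWithinAt_norm_of_eq_zero (hf : HasDerivAt f d x) (h0 : f x = 0) :
    HasDerivWithinAt (‖f ·‖) ‖d‖ (Ici x) x := by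
  rw [hasDerivWithinAt_iff_isLittleO]
  refine IsBigO.trans_isLittleO ?_ ((hasDerivAt_iff_isLittleO.1 hf).mono nhdsWithin_le_nhds)
  refine IsBigO.of_bound' (eventually_nhdsWithin_of_forall fun t (ht : x ≤ t) => ?_)
  rw [h0, norm_zero, sub_zero, sub_zero, smul_eq_mul, Real.norm_eq_abs]
  calc |‖f t‖ - (t - x) * ‖d‖| = |‖f t‖ - ‖(t - x) • d‖| := by
        rw [norm_smul, Real.norm_of_nonneg (sub_nonneg.2 ht)]
    _ ≤ ‖f t - (t - x) • d‖ := abs_norm_sub_norm_le _ _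

theorem HasDerivAt.hasDerivWithinAt_norm (hf : HasDerivAt f d x) :
    HasDerivWithinAt (‖f ·‖) (normRightDeriv 𝕜 (f x) d) (Ici x) x := by
  unfold normRightDeriv
  split_ifs with h0
  · exact hf.hasDerivWithinAt_norm_of_eq_zero h0
  · exact (hf.norm_of_ne_zero h0).hasDerivWithinAt

end NormRightDeriv

theorem nonpos_of_hasDerivWithinAt_Ici_le_mul {u u' : ℝ → ℝ} {K a b : ℝ}
    (hu : ContinuousOn u (Icc a b)) (hu' : ∀ x ∈ Ico a b, HasDerivWithinAt u (u' x) (Ici x) x)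
    (hbound : ∀ x ∈ Ico a b, u' x ≤ K * u x) (ha : u a ≤ 0) : ∀ x ∈ Icc a b, u x ≤ 0 := by
  intro x hx
  have := le_gronwallBound_of_liminf_deriv_right_le (ε := 0) hu
    (fun x hx _ hr => (hu' x hx).liminf_right_slope_le hr) ha
    (fun x hx => (hbound x hx).trans_eq (add_zero _).symm) x hx
  rwa [gronwallBound_ε0_δ0] at this

theorem stmt16_general (m n : ℕ)
    (Mm Θmm : ℝ → (EuclideanSpace ℂ (Fin m) →L[ℂ] EuclideanSpace ℂ (Fin m)))
    (Θmp : ℝ → (EuclideanSpace ℂ (Fin n) →L[ℂ] EuclideanSpace ℂ (Fin m)))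
    (Θpm : ℝ → (EuclideanSpace ℂ (Fin m) →L[ℂ] EuclideanSpace ℂ (Fin n)))
    (Mp Θpp : ℝ → (EuclideanSpace ℂ (Fin n) →L[ℂ] EuclideanSpace ℂ (Fin n)))
    (cm cp δ θmm θmp θpm θpp : ℝ)
    (hMm : ∀ (x : ℝ) (v : EuclideanSpace ℂ (Fin m)),
      (inner ℂ (Mm x v) v : ℂ).re ≤ cm * ‖v‖ ^ 2)
    (hMp : ∀ (x : ℝ) (w : EuclideanSpace ℂ (Fin n)),
      cp * ‖w‖ ^ 2 ≤ (inner ℂ (Mp x w) w : ℂ).re)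
    (hnmm : ∀ x, ‖Θmm x‖ ≤ θmm) (hnmp : ∀ x, ‖Θmp x‖ ≤ θmp)
    (hnpm : ∀ x, ‖Θpm x‖ ≤ θpm) (hnpp : ∀ x, ‖Θpp x‖ ≤ θpp)
    (hgap : δ ≤ cp - cm)
    (z : ℝ) (hz : 0 < z)
    (hzq : θpm * z ^ 2 - (δ - θmm - θpp) * z + θmp < 0)
    (Wm : ℝ → EuclideanSpace ℂ (Fin m)) (Wp : ℝ → EuclideanSpace ℂ (Fin n))
    (hWm : ∀ x, HasDerivAt Wm (Mm x (Wm x) + Θmm x (Wm x) + Θmp x (Wp x)) x)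
    (hWp : ∀ x, HasDerivAt Wp (Mp x (Wp x) + Θpm x (Wm x) + Θpp x (Wp x)) x)
    (x₀ : ℝ) (hx₀ : ‖Wm x₀‖ ≤ z * ‖Wp x₀‖) :
    ∀ x : ℝ, x₀ ≤ x → ‖Wm x‖ ≤ z * ‖Wp x‖ := by
  intro x hx
  have hQ : θpm * z ^ 2 - (cp - cm - θmm - θpp) * z + θmp ≤ 0 := by
    linarith [mul_le_mul_of_nonneg_right hgap hz.le]
  set rm := fun t => Θmm t (Wm t) + Θmp t (Wp t)
  set rp := fun t => Θpm t (Wm t) + Θpp t (Wp t)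
  have hrm : ∀ t, ‖rm t‖ ≤ θmm * ‖Wm t‖ + θmp * ‖Wp t‖ := fun t =>
    norm_add_le_of_le ((Θmm t).le_of_opNorm_le (hnmm t) _) ((Θmp t).le_of_opNorm_le (hnmp t) _)
  have hrp : ∀ t, ‖rp t‖ ≤ θpm * ‖Wm t‖ + θpp * ‖Wp t‖ := fun t =>
    norm_add_le_of_le ((Θpm t).le_of_opNorm_le (hnpm t) _) ((Θpp t).le_of_opNorm_le (hnpp t) _)
  set u' := fun t => normRightDeriv ℂ (Wm t) (Mm t (Wm t) + rm t)
    - z * normRightDeriv ℂ (Wp t) (Mp t (Wp t) + rp t)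
  have hu' : ∀ t, HasDerivWithinAt (fun t => ‖Wm t‖ - z * ‖Wp t‖) (u' t) (Ici t) t := fun t =>
    ((hWm t).congr_deriv (add_assoc _ _ _)).hasDerivWithinAt_norm.sub
      (((hWp t).congr_deriv (add_assoc _ _ _)).hasDerivWithinAt_norm.const_mul z)
  have hbound : ∀ t, u' t ≤ (cm + θmm + z * θpm) * (‖Wm t‖ - z * ‖Wp t‖) := fun t => by
    have hm : normRightDeriv ℂ (Wm t) (Mm t (Wm t) + rm t)
        ≤ (cm + θmm) * ‖Wm t‖ + θmp * ‖Wp t‖ := by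
      linarith [normRightDeriv_le (𝕜 := ℂ) (A := Mm t) (hMm t) (Wm t) (rm t), hrm t]
    have hp : (cp - θpp) * ‖Wp t‖ - θpm * ‖Wm t‖
        ≤ normRightDeriv ℂ (Wp t) (Mp t (Wp t) + rp t) := by
      linarith [le_normRightDeriv (𝕜 := ℂ) (A := Mp t) (hMp t) (Wp t) (rp t), hrp t]
    linarith [mul_le_mul_of_nonneg_left hp hz.le,
      mul_nonpos_of_nonpos_of_nonneg hQ (norm_nonneg (Wp t))]
  have hcont : Continuous fun t => ‖Wm t‖ - z * ‖Wp t‖ :=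
    (continuous_iff_continuousAt.2 fun t => (hWm t).continuousAt).norm.sub
      (continuous_const.mul (continuous_iff_continuousAt.2 fun t => (hWp t).continuousAt).norm)
  exact sub_nonpos.1 (nonpos_of_hasDerivWithinAt_Ici_le_mul hcont.continuousOn
    (fun t _ => hu' t) (fun t _ => hbound t) (sub_nonpos.2 hx₀) x ⟨hx, le_rfl⟩)

/-- Invariant-cone conclusion of the quantitative tracking lemma for
approximately block-diagonal first-order systems `W' = (M + Θ)W`: under the
spectral gap condition `δ > θ₋₋ + θ₊₊ + 2√(θ₋₊θ₊₋)`, the cone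
`{‖W₋‖ ≤ z‖W₊‖}` is forward invariant for any `z > 0` with
`θ₊₋z² − (δ − θ₋₋ − θ₊₊)z + θ₋₊ < 0`. -/
theorem stmt16 (m n : ℕ) (hm : 1 ≤ m) (hn : 1 ≤ n)
    (Mm Θmm : ℝ → (EuclideanSpace ℂ (Fin m) →L[ℂ] EuclideanSpace ℂ (Fin m)))
    (Θmp : ℝ → (EuclideanSpace ℂ (Fin n) →L[ℂ] EuclideanSpace ℂ (Fin m)))
    (Θpm : ℝ → (EuclideanSpace ℂ (Fin m) →L[ℂ] EuclideanSpace ℂ (Fin n)))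
    (Mp Θpp : ℝ → (EuclideanSpace ℂ (Fin n) →L[ℂ] EuclideanSpace ℂ (Fin n)))
    (hMmc : Continuous Mm) (hΘmmc : Continuous Θmm) (hΘmpc : Continuous Θmp)
    (hΘpmc : Continuous Θpm) (hMpc : Continuous Mp) (hΘppc : Continuous Θpp)
    (cm cp δ θmm θmp θpm θpp : ℝ)
    (hθmm : 0 ≤ θmm) (hθpp : 0 ≤ θpp) (hθmp : 0 < θmp) (hθpm : 0 < θpm)
    (hMm : ∀ (x : ℝ) (v : EuclideanSpace ℂ (Fin m)),
      (inner ℂ (Mm x v) v : ℂ).re ≤ cm * ‖v‖ ^ 2)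
    (hMp : ∀ (x : ℝ) (w : EuclideanSpace ℂ (Fin n)),
      cp * ‖w‖ ^ 2 ≤ (inner ℂ (Mp x w) w : ℂ).re)
    (hnmm : ∀ x, ‖Θmm x‖ ≤ θmm) (hnmp : ∀ x, ‖Θmp x‖ ≤ θmp)
    (hnpm : ∀ x, ‖Θpm x‖ ≤ θpm) (hnpp : ∀ x, ‖Θpp x‖ ≤ θpp)
    (hgap : δ ≤ cp - cm)
    (hδ : θmm + θpp + 2 * Real.sqrt (θmp * θpm) < δ)
    (z : ℝ) (hz : 0 < z)
    (hzq : θpm * z ^ 2 - (δ - θmm - θpp) * z + θmp < 0)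
    (Wm : ℝ → EuclideanSpace ℂ (Fin m)) (Wp : ℝ → EuclideanSpace ℂ (Fin n))
    (hWm : ∀ x, HasDerivAt Wm (Mm x (Wm x) + Θmm x (Wm x) + Θmp x (Wp x)) x)
    (hWp : ∀ x, HasDerivAt Wp (Mp x (Wp x) + Θpm x (Wm x) + Θpp x (Wp x)) x)
    (x₀ : ℝ) (hx₀ : ‖Wm x₀‖ ≤ z * ‖Wp x₀‖) :
    ∀ x : ℝ, x₀ ≤ x → ‖Wm x‖ ≤ z * ‖Wp x‖ :=
  stmt16_general m n Mm Θmm Θmp Θpm Mp Θpp cm cp δ θmm θmp θpm θpp hMm hMp hnmm hnmp hnpm hnpp hgap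
    z hz hzq Wm Wp hWm hWp x₀ hx₀
end

section
/- Let s ≥ 0, r ≥ 1, F > 0, ν > 0, c ≠ 0, q ∈ ℝ, and let τ₀ > 0, u₀ := q − cτ₀ > 0 satisfy the equilibrium condition τ₀^{s+1}·u₀^r = 1. Set c_s² := 1/(F·τ₀³), df_* := ((s+1)/r)·(u₀/τ₀), and g' := −(s+1)·τ₀^s·u₀^r + c·r·τ₀^{s+1}·u₀^{r−1}, and define the 2×2 real matrix J := [[0, τ₀²], [g'/(cν), (c_s² − c²)·τ₀²/(cν)]]. Then J has two real eigenvalues of opposite signs (one positive, one negative) if and only if c·(df_* − c) < 0; that is, the equilibrium τ₀ of the traveling-wave profile ODE is a saddle point exactly when c·(df_*(τ₀) − c) < 0. -/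
/-!
A real 2 × 2 matrix has a negative and a positive eigenvalue exactly when its determinant,
the product of the eigenvalues, is negative. For `J` the determinant is `-τ₀² g' / (c ν)`, and
the equilibrium relation `τ₀^(s+1) u₀^r = 1` turns `g'` into `(r c τ₀ - (s+1) u₀) / (τ₀ u₀)`,
so that `c (df - c) = -(u₀ / r) c g'`: both signs are the sign of `-c g'`.
-/

open Matrix

theorem Matrix.det_sub_smul_one_fin_two {R : Type*} [CommRing R] (A : Matrix (Fin 2) (Fin 2) R)
    (μ : R) : (A - μ • (1 : Matrix (Fin 2) (Fin 2) R)).det = μ ^ 2 - A.trace * μ + A.det := by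
  rw [det_fin_two, det_fin_two A, trace_fin_two]
  simp only [sub_apply, smul_apply, one_fin_two, of_apply, cons_val', cons_val_zero, cons_val_one,
    empty_val', cons_val_fin_one, smul_eq_mul]
  ring

theorem exists_neg_pos_roots_iff {t d : ℝ} :
    (∃ x y : ℝ, x < 0 ∧ 0 < y ∧ x ^ 2 - t * x + d = 0 ∧ y ^ 2 - t * y + d = 0) ↔ d < 0 := by
  constructor
  · rintro ⟨x, y, hx, hy, hx_root, hy_root⟩
    have hsum : x + y = t := by
      have : (x - y) * (x + y - t) = 0 := by linear_combination hx_root - hy_root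
      rcases mul_eq_zero.mp this with h | h <;> linarith
    have hprod : d = x * y := by linear_combination hx_root - x * hsum
    exact hprod ▸ mul_neg_of_neg_of_pos hx hy
  · intro hd
    set w := √(t ^ 2 - 4 * d)
    have hw : w ^ 2 = t ^ 2 - 4 * d := Real.sq_sqrt (by nlinarith [sq_nonneg t])
    have ht : |t| < w := (Real.lt_sqrt (abs_nonneg t)).mpr (by rw [sq_abs]; linarith)
    obtain ⟨ht_lower, ht_upper⟩ := abs_lt.mp ht
    refine ⟨(t - w) / 2, (t + w) / 2, by linarith, by linarith, ?_, ?_⟩ <;>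
      linear_combination (1 / 4 : ℝ) * hw

theorem Matrix.exists_neg_pos_eigenvalue_iff_det_neg_fin_two (A : Matrix (Fin 2) (Fin 2) ℝ) :
    (∃ μ₁ μ₂ : ℝ, μ₁ < 0 ∧ 0 < μ₂ ∧
        (A - μ₁ • (1 : Matrix (Fin 2) (Fin 2) ℝ)).det = 0 ∧
        (A - μ₂ • (1 : Matrix (Fin 2) (Fin 2) ℝ)).det = 0) ↔ A.det < 0 := by
  simp only [det_sub_smul_one_fin_two]
  exact exists_neg_pos_roots_iff

theorem mul_charSpeed_sub_eq {s r c τ u : ℝ} (hr : r ≠ 0) (hτ : 0 < τ) (hu : 0 < u)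
    (heq : τ ^ (s + 1) * u ^ r = 1) :
    c * ((s + 1) / r * (u / τ) - c) =
      -(u / r) * (c * (-(s + 1) * τ ^ s * u ^ r + c * r * τ ^ (s + 1) * u ^ (r - 1))) := by
  have hτ_pow : τ ^ (s + 1) = τ ^ s * τ := by rw [Real.rpow_add hτ, Real.rpow_one]
  have hu_pow : u ^ r = u ^ (r - 1) * u := by
    rw [← Real.rpow_add_one hu.ne', sub_add_cancel]
  rw [hτ_pow, hu_pow] at heq ⊢
  field_simp
  linear_combination (c ^ 2 * r * τ - c * (s + 1) * u) * heq

theorem stmt17_general (s r ν c τ₀ u₀ : ℝ) (hr : 1 ≤ r)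
    (hν : 0 < ν) (hc : c ≠ 0)
    (hτ₀ : 0 < τ₀) (hu₀ : 0 < u₀)
    (heq : τ₀ ^ (s + 1) * u₀ ^ r = 1)
    (cs2 df g' : ℝ)
    (hdf : df = ((s + 1) / r) * (u₀ / τ₀))
    (hg' : g' = -(s + 1) * τ₀ ^ s * u₀ ^ r + c * r * τ₀ ^ (s + 1) * u₀ ^ (r - 1))
    (J : Matrix (Fin 2) (Fin 2) ℝ)
    (hJ : J = !![0, τ₀ ^ 2; g' / (c * ν), (cs2 - c ^ 2) * τ₀ ^ 2 / (c * ν)]) :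
    (∃ μ₁ μ₂ : ℝ, μ₁ < 0 ∧ 0 < μ₂ ∧
        (J - μ₁ • (1 : Matrix (Fin 2) (Fin 2) ℝ)).det = 0 ∧
        (J - μ₂ • (1 : Matrix (Fin 2) (Fin 2) ℝ)).det = 0)
      ↔ c * (df - c) < 0 := by
  have hr_pos : 0 < r := by linarith
  have hc_sq : 0 < c ^ 2 := pow_two_pos_of_ne_zero hc
  have hdet : J.det = -(τ₀ ^ 2 / (c ^ 2 * ν)) * (c * g') := by
    rw [hJ, det_fin_two_of]
    field_simp
    ring
  have hspeed : c * (df - c) = -(u₀ / r) * (c * g') := by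
    rw [hdf, hg']
    exact mul_charSpeed_sub_eq hr_pos.ne' hτ₀ hu₀ heq
  have hdet_coeff : 0 < τ₀ ^ 2 / (c ^ 2 * ν) := by positivity
  have hspeed_coeff : 0 < u₀ / r := by positivity
  rw [exists_neg_pos_eigenvalue_iff_det_neg_fin_two, hdet, hspeed, neg_mul, neg_mul,
    neg_lt_zero, neg_lt_zero, mul_pos_iff_of_pos_left hdet_coeff,
    mul_pos_iff_of_pos_left hspeed_coeff]

/-- The equilibrium `(τ₀, 0)` of the St. Venant traveling-wave profile ODE,
with Jacobian `J = [[0, τ₀²], [g'/(cν), (c_s² − c²)τ₀²/(cν)]]`, is a saddle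
point (two real eigenvalues of opposite signs) exactly when
`c·(df_*(τ₀) − c) < 0`. -/
theorem stmt17 (s r F ν c q τ₀ u₀ : ℝ) (hs : 0 ≤ s) (hr : 1 ≤ r)
    (hF : 0 < F) (hν : 0 < ν) (hc : c ≠ 0)
    (hτ₀ : 0 < τ₀) (hu₀def : u₀ = q - c * τ₀) (hu₀ : 0 < u₀)
    (heq : τ₀ ^ (s + 1) * u₀ ^ r = 1)
    (cs2 df g' : ℝ)
    (hcs2 : cs2 = 1 / (F * τ₀ ^ 3))
    (hdf : df = ((s + 1) / r) * (u₀ / τ₀))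
    (hg' : g' = -(s + 1) * τ₀ ^ s * u₀ ^ r + c * r * τ₀ ^ (s + 1) * u₀ ^ (r - 1))
    (J : Matrix (Fin 2) (Fin 2) ℝ)
    (hJ : J = !![0, τ₀ ^ 2; g' / (c * ν), (cs2 - c ^ 2) * τ₀ ^ 2 / (c * ν)]) :
    (∃ μ₁ μ₂ : ℝ, μ₁ < 0 ∧ 0 < μ₂ ∧
        (J - μ₁ • (1 : Matrix (Fin 2) (Fin 2) ℝ)).det = 0 ∧
        (J - μ₂ • (1 : Matrix (Fin 2) (Fin 2) ℝ)).det = 0)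
      ↔ c * (df - c) < 0 :=
  stmt17_general s r ν c τ₀ u₀ hr hν hc hτ₀ hu₀ heq cs2 df g' hdf hg' J hJ
end

section
/- Let s ≥ 0, r ≥ 1, F > 0, ν > 0, c ≠ 0, q ∈ ℝ, and let τ₀ > 0, u₀ := q − cτ₀ > 0 satisfy τ₀^{s+1}·u₀^r = 1. Set c_s² := 1/(F·τ₀³), df_* := ((s+1)/r)·(u₀/τ₀), g' := −(s+1)·τ₀^s·u₀^r + c·r·τ₀^{s+1}·u₀^{r−1}, and J := [[0, τ₀²], [g'/(cν), (c_s² − c²)·τ₀²/(cν)]]. Assume c·(df_* − c) > 0. Then all complex eigenvalues of J have strictly positive real part (the equilibrium is a repellor) if and only if c·(c² − c_s²) < 0, and all complex eigenvalues of J have strictly negative real part (the equilibrium is an attractor) if and only if c·(c² − c_s²) > 0. -/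
open Matrix

/-! The characteristic polynomial of `J` is `μ² − tr J · μ + det J`. The non-saddle condition makes
`det J = −τ₀² g'/(cν)` positive, since `g' = τ₀^{s+1} u₀^{r−1} r (c − df_*)`. For a real quadratic
with positive constant term both complex roots have real part of the sign of the trace: either they
are conjugate with real part `tr J / 2`, or they are real with product `det J > 0` and sum `tr J`.
Finally `tr J = (c_s² − c²) τ₀²/(cν)` has the sign of `−c (c² − c_s²)`. -/

lemma Matrix.det_map_ofReal_sub_smul_one_fin_two (A : Matrix (Fin 2) (Fin 2) ℝ) (μ : ℂ) :
    (A.map Complex.ofReal - μ • (1 : Matrix (Fin 2) (Fin 2) ℂ)).det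
      = μ ^ 2 - (A.trace : ℂ) * μ + (A.det : ℂ) := by
  simp only [det_fin_two, trace_fin_two, sub_apply, map_apply, smul_apply, one_apply_eq,
    one_apply_ne (by decide : (0 : Fin 2) ≠ 1), one_apply_ne (by decide : (1 : Fin 2) ≠ 0),
    smul_eq_mul, mul_one, mul_zero, sub_zero]
  push_cast
  ring

lemma Complex.exists_sq_sub_mul_add_eq_zero (T D : ℝ) :
    ∃ μ : ℂ, μ ^ 2 - (T : ℂ) * μ + (D : ℂ) = 0 := by
  obtain ⟨z, hz⟩ := IsAlgClosed.exists_eq_mul_self (discrim 1 (-(T : ℂ)) D)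
  obtain ⟨μ, hμ⟩ := exists_quadratic_eq_zero one_ne_zero ⟨z, hz⟩
  exact ⟨μ, by linear_combination hμ⟩

lemma Complex.re_pos_iff_of_sq_sub_mul_add_eq_zero {T D : ℝ} (hD : 0 < D) {μ : ℂ}
    (h : μ ^ 2 - (T : ℂ) * μ + (D : ℂ) = 0) : 0 < μ.re ↔ 0 < T := by
  have hre : μ.re ^ 2 - μ.im ^ 2 - T * μ.re + D = 0 := by
    simpa [sq] using congrArg Complex.re h
  have him : μ.im * (2 * μ.re - T) = 0 := by
    have := congrArg Complex.im h
    simp only [sq, mul_im, ofReal_re, ofReal_im, add_im, sub_im, zero_im] at this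
    linear_combination this
  rcases mul_eq_zero.mp him with hreal | hconj
  · rw [hreal] at hre
    constructor <;> intro hpos <;> nlinarith
  · constructor <;> intro hpos <;> linarith

lemma Complex.re_neg_iff_of_sq_sub_mul_add_eq_zero {T D : ℝ} (hD : 0 < D) {μ : ℂ}
    (h : μ ^ 2 - (T : ℂ) * μ + (D : ℂ) = 0) : μ.re < 0 ↔ T < 0 := by
  have h' : (-μ) ^ 2 - ((-T : ℝ) : ℂ) * (-μ) + (D : ℂ) = 0 := by
    push_cast
    linear_combination h
  simpa using re_pos_iff_of_sq_sub_mul_add_eq_zero hD h'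

section EigenvalueSigns

variable (A : Matrix (Fin 2) (Fin 2) ℝ)

lemma Matrix.forall_det_sub_smul_eq_zero_re_pos_iff (hA : 0 < A.det) :
    (∀ μ : ℂ, (A.map Complex.ofReal - μ • (1 : Matrix (Fin 2) (Fin 2) ℂ)).det = 0 → 0 < μ.re)
      ↔ 0 < A.trace := by
  simp only [det_map_ofReal_sub_smul_one_fin_two]
  obtain ⟨μ₀, hμ₀⟩ := Complex.exists_sq_sub_mul_add_eq_zero A.trace A.det
  exact ⟨fun h ↦ (Complex.re_pos_iff_of_sq_sub_mul_add_eq_zero hA hμ₀).mp (h μ₀ hμ₀),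
    fun hT μ hμ ↦ (Complex.re_pos_iff_of_sq_sub_mul_add_eq_zero hA hμ).mpr hT⟩

lemma Matrix.forall_det_sub_smul_eq_zero_re_neg_iff (hA : 0 < A.det) :
    (∀ μ : ℂ, (A.map Complex.ofReal - μ • (1 : Matrix (Fin 2) (Fin 2) ℂ)).det = 0 → μ.re < 0)
      ↔ A.trace < 0 := by
  simp only [det_map_ofReal_sub_smul_one_fin_two]
  obtain ⟨μ₀, hμ₀⟩ := Complex.exists_sq_sub_mul_add_eq_zero A.trace A.det
  exact ⟨fun h ↦ (Complex.re_neg_iff_of_sq_sub_mul_add_eq_zero hA hμ₀).mp (h μ₀ hμ₀),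
    fun hT μ hμ ↦ (Complex.re_neg_iff_of_sq_sub_mul_add_eq_zero hA hμ).mpr hT⟩

end EigenvalueSigns

lemma neg_mul_rpow_add_mul_rpow_eq {s r c τ u : ℝ} (hr : r ≠ 0) (hτ : 0 < τ) (hu : 0 < u) :
    -(s + 1) * τ ^ s * u ^ r + c * r * τ ^ (s + 1) * u ^ (r - 1)
      = τ ^ (s + 1) * u ^ (r - 1) * r * (c - (s + 1) / r * (u / τ)) := by
  rw [Real.rpow_add_one hτ.ne', Real.rpow_sub_one hu.ne']
  field_simp
  ring

theorem stmt18_general (s r ν c τ₀ u₀ : ℝ) (hr : 1 ≤ r)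
    (hν : 0 < ν) (hc : c ≠ 0)
    (hτ₀ : 0 < τ₀) (hu₀ : 0 < u₀)
    (cs2 df g' : ℝ)
    (hdf : df = ((s + 1) / r) * (u₀ / τ₀))
    (hg' : g' = -(s + 1) * τ₀ ^ s * u₀ ^ r + c * r * τ₀ ^ (s + 1) * u₀ ^ (r - 1))
    (J : Matrix (Fin 2) (Fin 2) ℝ)
    (hJ : J = !![0, τ₀ ^ 2; g' / (c * ν), (cs2 - c ^ 2) * τ₀ ^ 2 / (c * ν)])
    (hnonsaddle : c * (df - c) > 0) :
    ((∀ μ : ℂ,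
        (J.map (Complex.ofReal) - μ • (1 : Matrix (Fin 2) (Fin 2) ℂ)).det = 0 →
          0 < μ.re)
      ↔ c * (c ^ 2 - cs2) < 0)
    ∧ ((∀ μ : ℂ,
        (J.map (Complex.ofReal) - μ • (1 : Matrix (Fin 2) (Fin 2) ℂ)).det = 0 →
          μ.re < 0)
      ↔ c * (c ^ 2 - cs2) > 0) := by
  have hr₀ : 0 < r := by linarith
  have hscale : 0 < τ₀ ^ 2 / (c ^ 2 * ν) := by positivity
  have hg'c : 0 < -(g' * c) := by
    have hP : 0 < τ₀ ^ (s + 1) * u₀ ^ (r - 1) := by positivity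
    rw [hg', neg_mul_rpow_add_mul_rpow_eq hr₀.ne' hτ₀ hu₀, ← hdf]
    nlinarith [mul_pos (mul_pos hP hr₀) hnonsaddle]
  have hdet : J.det = -(g' * c) * (τ₀ ^ 2 / (c ^ 2 * ν)) := by
    rw [hJ, det_fin_two_of]
    field_simp
    ring
  have htrace : J.trace = -(c * (c ^ 2 - cs2)) * (τ₀ ^ 2 / (c ^ 2 * ν)) := by
    rw [hJ, trace_fin_two_of]
    field_simp
    ring
  have hdet_pos : 0 < J.det := hdet ▸ mul_pos hg'c hscale
  rw [J.forall_det_sub_smul_eq_zero_re_pos_iff hdet_pos,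
    J.forall_det_sub_smul_eq_zero_re_neg_iff hdet_pos, htrace,
    mul_pos_iff_of_pos_right hscale, neg_mul, neg_lt_zero, mul_pos_iff_of_pos_right hscale]
  exact ⟨neg_pos, Iff.rfl⟩

/-- When `c·(df_* − c) > 0`, the non-saddle equilibrium `(τ₀, 0)` of the
St. Venant traveling-wave profile ODE, with Jacobian
`J = [[0, τ₀²], [g'/(cν), (c_s² − c²)τ₀²/(cν)]]`, is a repellor (all complex
eigenvalues have positive real part) iff `c·(c² − c_s²) < 0`, and an attractor
(all complex eigenvalues have negative real part) iff `c·(c² − c_s²) > 0`. -/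
theorem stmt18 (s r F ν c q τ₀ u₀ : ℝ) (hs : 0 ≤ s) (hr : 1 ≤ r)
    (hF : 0 < F) (hν : 0 < ν) (hc : c ≠ 0)
    (hτ₀ : 0 < τ₀) (hu₀def : u₀ = q - c * τ₀) (hu₀ : 0 < u₀)
    (heq : τ₀ ^ (s + 1) * u₀ ^ r = 1)
    (cs2 df g' : ℝ)
    (hcs2 : cs2 = 1 / (F * τ₀ ^ 3))
    (hdf : df = ((s + 1) / r) * (u₀ / τ₀))
    (hg' : g' = -(s + 1) * τ₀ ^ s * u₀ ^ r + c * r * τ₀ ^ (s + 1) * u₀ ^ (r - 1))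
    (J : Matrix (Fin 2) (Fin 2) ℝ)
    (hJ : J = !![0, τ₀ ^ 2; g' / (c * ν), (cs2 - c ^ 2) * τ₀ ^ 2 / (c * ν)])
    (hnonsaddle : c * (df - c) > 0) :
    ((∀ μ : ℂ,
        (J.map (Complex.ofReal) - μ • (1 : Matrix (Fin 2) (Fin 2) ℂ)).det = 0 →
          0 < μ.re)
      ↔ c * (c ^ 2 - cs2) < 0)
    ∧ ((∀ μ : ℂ,
        (J.map (Complex.ofReal) - μ • (1 : Matrix (Fin 2) (Fin 2) ℂ)).det = 0 →
          μ.re < 0)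
      ↔ c * (c ^ 2 - cs2) > 0) :=
  stmt18_general s r ν c τ₀ u₀ hr hν hc hτ₀ hu₀ cs2 df g' hdf hg' J hJ hnonsaddle
end
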